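/- Let K be an algebraically closed field of characteristic 0, let n ≥ 2 and d ≥ 3, and set r = ⌈(d+2)/2⌉. If S is a set of r distinct points of ℙ^n that are not collinear (their representative vectors span a subspace of K^{n+1} of dimension ≥ 3), then the double points 2S impose independent conditions on degree-d forms: the subspace of degree-d forms in x_0,…,x_n whose first-order partial derivatives all vanish at every point of S has dimension exactly binom(n+d, n) − r(n+1). (Equivalently, ν_d(S) ∉ Ter_r(V_n^d).) -/

import Mathlib

/-!
The map sending a degree-`d` form to its gradients at the `r` points is onto `K^{r(n+1)}`,
and rank–nullity gives the dimension. For surjectivity, fix a point `S a`. Non-collinearity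
gives two other points whose line misses `S a`, so one linear form vanishes at both but not
at `S a`; with one linear form through each remaining point this gives a product `h` of
`r - 2` linear forms with `h(S a) = 1` vanishing at every other point. Forms
`ℓ · ℓ'^(d - 1 - 2(r - 2)) · h²` are singular at the other points, and `2(r - 2) < d` for
`r = ⌈(d + 2)/2⌉` leaves room for the linear form `ℓ`; by Euler's identity a suitable `ℓ`
realises any gradient at `S a`.
-/

open MvPolynomial

/-- Homogeneous forms of degree `d` in `N` variables all of whose first-order partial
derivatives vanish at every point of the family `p`. -/
noncomputable def dblVanish (K : Type) [Field K] (N d : ℕ) {ι : Type} (p : ι → (Fin N → K)) :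
    Submodule K (MvPolynomial (Fin N) K) :=
  homogeneousSubmodule (Fin N) K d ⊓
    ⨅ (a : ι) (i : Fin N),
      LinearMap.ker ((aeval (p a)).toLinearMap ∘ₗ (pderiv i).toLinearMap)

open Module Submodule

section LinearAlgebra

variable {K V W : Type*} [Field K] [AddCommGroup V] [Module K V] [AddCommGroup W] [Module K W]

theorem Submodule.finrank_inf_ker_add_finrank_of_map_eq_top {H : Submodule K V}
    [FiniteDimensional K H] {f : V →ₗ[K] W} (hf : H.map f = ⊤) :
    finrank K ↥(H ⊓ LinearMap.ker f) + finrank K W = finrank K H := by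
  have hrange : LinearMap.range (f ∘ₗ H.subtype) = ⊤ := by
    rw [LinearMap.range_comp, Submodule.range_subtype, hf]
  have hker : H ⊓ LinearMap.ker f = (LinearMap.ker (f ∘ₗ H.subtype)).map H.subtype := by
    rw [LinearMap.ker_comp, Submodule.map_comap_subtype]
  rw [hker, Submodule.finrank_map_subtype_eq, ← finrank_top K W, ← hrange, add_comm]
  exact LinearMap.finrank_range_add_finrank_ker _

theorem Submodule.map_pi_eq_top_of_forall_exists {ι R M : Type*} [Fintype ι] [CommRing R]
    [AddCommGroup M] [Module R M] {N : ι → Type*} [∀ i, AddCommGroup (N i)]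
    [∀ i, Module R (N i)] {H : Submodule R M} {f : (i : ι) → M →ₗ[R] N i}
    (hf : ∀ i (y : N i), ∃ x ∈ H, f i x = y ∧ ∀ j ≠ i, f j x = 0) :
    H.map (LinearMap.pi f) = ⊤ := by
  refine eq_top_iff.mpr fun y _ => ?_
  choose x hxH hxi hxj using fun i => hf i (y i)
  refine ⟨∑ i, x i, H.sum_mem fun i _ => hxH i, funext fun j => ?_⟩
  rw [LinearMap.pi_apply, map_sum, Finset.sum_eq_single j (fun i _ hij => hxj i _ hij.symm)
    (by simp), hxi]

theorem exists_dotProduct_eq_one_of_notMem {ι : Type*} [Fintype ι] [DecidableEq ι]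
    {U : Submodule K (ι → K)} {x : ι → K} (hx : x ∉ U) :
    ∃ w : ι → K, (∀ u ∈ U, w ⬝ᵥ u = 0) ∧ w ⬝ᵥ x = 1 := by
  obtain ⟨φ, hφx, hφU⟩ := U.exists_dual_map_eq_bot_of_notMem hx inferInstance
  have hdot (v : ι → K) :
      (dotProductEquiv K ι).symm ((φ x)⁻¹ • φ) ⬝ᵥ v = (φ x)⁻¹ * φ v := by
    rw [← dotProductEquiv_apply_apply, LinearEquiv.apply_symm_apply]; rfl
  refine ⟨_, fun u hu => ?_, by rw [hdot, inv_mul_cancel₀ hφx]⟩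
  rw [hdot, (Submodule.eq_bot_iff _).mp hφU _ (mem_map_of_mem hu), mul_zero]

theorem exists_notMem_span_pair_of_three_le_finrank {ι : Type*} {v : ι → V}
    (hv : 3 ≤ finrank K ↥(span K (Set.range v))) (i j : ι) :
    ∃ k, v k ∉ span K {v i, v j} := by
  classical
  by_contra! h
  have hpair : finrank K ↥(span K {v i, v j}) ≤ 2 := by
    have := (finrank_span_finset_le_card (R := K) ({v i, v j} : Finset V)).trans
      Finset.card_le_two
    rwa [Set.finrank, Finset.coe_pair] at this
  have := FiniteDimensional.span_of_finite K (Set.toFinite {v i, v j})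
  have hle := Submodule.finrank_mono (span_le.mpr (Set.range_subset_iff.mpr h))
  omega

end LinearAlgebra

namespace MvPolynomial

variable {σ K : Type*} [Field K]

noncomputable def gradientAt (p : σ → K) : MvPolynomial σ K →ₗ[K] σ → K :=
  LinearMap.pi fun i => (aeval p).toLinearMap ∘ₗ (pderiv i).toLinearMap

@[simp]
theorem gradientAt_apply (p : σ → K) (f : MvPolynomial σ K) (i : σ) :
    gradientAt p f i = eval p (pderiv i f) :=
  rfl

theorem gradientAt_mul (p : σ → K) (f g : MvPolynomial σ K) :
    gradientAt p (f * g) = eval p f • gradientAt p g + eval p g • gradientAt p f := by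
  ext i
  simp only [gradientAt_apply, pderiv_mul, map_add, map_mul, Pi.add_apply, Pi.smul_apply,
    smul_eq_mul]
  ring

theorem gradientAt_mul_sq_of_eval_eq_zero {p : σ → K} {h : MvPolynomial σ K}
    (hp : eval p h = 0) (g : MvPolynomial σ K) : gradientAt p (g * h ^ 2) = 0 := by
  simp [gradientAt_mul, sq, hp]

instance [Finite σ] (d : ℕ) : Module.Finite K (homogeneousSubmodule σ K d) :=
  Module.Finite.iff_fg.mpr (homogeneousSubmodule_fg σ K d)

theorem finrank_homogeneousSubmodule [Fintype σ] [DecidableEq σ] (d : ℕ) :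
    Module.finrank K (homogeneousSubmodule σ K d) = (Fintype.card σ + d - 1).choose d := by
  let e : {s : σ →₀ ℕ | s.degree = d} ≃ Sym σ d := (Sym.equivNatSum σ d).symm
  have := Fintype.ofEquiv _ e.symm
  rw [homogeneousSubmodule_eq_finsupp_supported, ← restrictSupport,
    Module.finrank_eq_card_basis (basisRestrictSupport K _), Fintype.card_congr e,
    Sym.card_sym_eq_choose]

variable [Fintype σ]

theorem dotProduct_gradientAt {d : ℕ} {f : MvPolynomial σ K} (hf : f.IsHomogeneous d)
    (p : σ → K) : p ⬝ᵥ gradientAt p f = d * eval p f := by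
  simpa [dotProduct, nsmul_eq_mul] using congrArg (eval p) hf.sum_X_mul_pderiv

noncomputable def linearForm (w : σ → K) : MvPolynomial σ K :=
  ∑ i, C (w i) * X i

theorem isHomogeneous_linearForm (w : σ → K) : (linearForm w).IsHomogeneous 1 :=
  IsHomogeneous.sum _ _ _ fun i _ => isHomogeneous_C_mul_X (w i) i

@[simp]
theorem eval_linearForm (p w : σ → K) : eval p (linearForm w) = w ⬝ᵥ p := by
  simp [linearForm, dotProduct]

@[simp]
theorem gradientAt_linearForm (p w : σ → K) : gradientAt p (linearForm w) = w := by
  classical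
  ext j
  simp [linearForm, pderiv_X, Pi.single_apply]

variable [DecidableEq σ]

theorem exists_isHomogeneous_gradientAt_eq [CharZero K] {d e : ℕ} (hed : 2 * e < d)
    {x : σ → K} (hx : x ≠ 0) {h : MvPolynomial σ K} (hh : h.IsHomogeneous e)
    (hhx : eval x h = 1) (v : σ → K) :
    ∃ f : MvPolynomial σ K, f.IsHomogeneous d ∧ gradientAt x f = v ∧
      ∀ p, eval p h = 0 → gradientAt p f = 0 := by
  obtain ⟨u, -, hu⟩ :=
    exists_dotProduct_eq_one_of_notMem (U := ⊥) (x := x) (by simpa using hx)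
  set q := linearForm u ^ (d - 1 - 2 * e) * h ^ 2
  have hq : q.IsHomogeneous (d - 1) := by
    convert ((isHomogeneous_linearForm u).pow _).mul (hh.pow 2) using 1
    omega
  have hqx : eval x q = 1 := by simp [q, hu, hhx]
  have hdK : (d : K) ≠ 0 := by norm_cast; omega
  -- Euler's identity for `q` gives `x ⬝ᵥ g = d - 1`, which fixes the correction `t • g`.
  set g := gradientAt x q
  have hg : x ⬝ᵥ g = d - 1 := by
    rw [dotProduct_gradientAt hq, hqx, Nat.cast_pred (by omega), mul_one]
  set t := x ⬝ᵥ v / d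
  set w := v - t • g
  have hwx : w ⬝ᵥ x = t := by
    rw [dotProduct_comm, dotProduct_sub, dotProduct_smul, hg, smul_eq_mul]
    simp only [t]
    field_simp
    ring
  refine ⟨linearForm w * q, ?_, ?_, fun p hp => ?_⟩
  · convert (isHomogeneous_linearForm w).mul hq using 1
    omega
  · rw [gradientAt_mul, gradientAt_linearForm, eval_linearForm, hwx, hqx, one_smul]
    exact add_sub_cancel _ _
  · rw [← mul_assoc]
    exact gradientAt_mul_sq_of_eval_eq_zero hp _

theorem exists_isHomogeneous_eval_eq_one_of_notMem {ι : Type*} (s : Finset ι)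
    (U : ι → Submodule K (σ → K)) {x : σ → K} (hx : ∀ i ∈ s, x ∉ U i) :
    ∃ h : MvPolynomial σ K, h.IsHomogeneous s.card ∧ eval x h = 1 ∧
      ∀ i ∈ s, ∀ p ∈ U i, eval p h = 0 := by
  classical
  induction s using Finset.induction_on with
  | empty => exact ⟨1, isHomogeneous_one σ K, map_one _, by simp⟩
  | insert j s hj ih =>
    obtain ⟨h, hh, hhx, hhU⟩ := ih fun i hi => hx i (Finset.mem_insert_of_mem hi)
    obtain ⟨w, hwU, hwx⟩ :=
      exists_dotProduct_eq_one_of_notMem (hx j (Finset.mem_insert_self j s))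
    refine ⟨linearForm w * h, ?_, by simp [hwx, hhx], fun i hi p hp => ?_⟩
    · rw [Finset.card_insert_of_notMem hj, add_comm]
      exact (isHomogeneous_linearForm w).mul hh
    · rcases Finset.mem_insert.mp hi with rfl | hi
      · simp [hwU p hp]
      · simp [hhU i hi p hp]

theorem exists_isHomogeneous_eval_eq_one_eval_eq_zero {ι : Type*} [Fintype ι]
    {S : ι → σ → K} (hdist : ∀ i j, i ≠ j → S i ∉ K ∙ S j)
    (hspan : ∀ i j, ∃ k, S k ∉ span K {S i, S j}) (a : ι) :
    ∃ h : MvPolynomial σ K, h.IsHomogeneous (Fintype.card ι - 2) ∧ eval (S a) h = 1 ∧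
      ∀ b ≠ a, eval (S b) h = 0 := by
  classical
  obtain ⟨b, hb⟩ := hspan a a
  rw [Set.pair_eq_singleton] at hb
  obtain ⟨c, hc⟩ := hspan a b
  have hba : b ≠ a := by rintro rfl; exact hb (mem_span_singleton_self _)
  have hca : c ≠ a := by rintro rfl; exact hc (subset_span (by simp))
  have hcb : c ≠ b := by rintro rfl; exact hc (subset_span (by simp))
  have habc : S a ∉ span K {S c, S b} := fun h =>
    hc (mem_span_insert_exchange h (hdist a b hba.symm))
  -- One linear form kills both `S b` and `S c`; each other point costs one linear form.
  let U i := if i = b then span K {S c, S b} else K ∙ S i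
  obtain ⟨h, hh, h1, h0⟩ := exists_isHomogeneous_eval_eq_one_of_notMem
    ((Finset.univ.erase a).erase c) U (x := S a) fun i hi => by
      have hia : i ≠ a := (Finset.mem_erase.mp (Finset.mem_erase.mp hi).2).1
      by_cases hib : i = b <;> simp [U, hib, habc, hdist a i hia.symm]
  refine ⟨h, ?_, h1, fun i hia => ?_⟩
  · rwa [Finset.card_erase_of_mem (by simp [hca]), Finset.card_erase_of_mem (by simp),
      Finset.card_univ, Nat.sub_sub] at hh
  · have hbmem : b ∈ (Finset.univ.erase a).erase c := by simp [hba, hcb.symm]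
    have hUb : ∀ p ∈ ({S c, S b} : Set (σ → K)), eval p h = 0 := fun p hp =>
      h0 b hbmem p (by simpa [U] using subset_span hp)
    by_cases hi : i = c ∨ i = b
    · exact hUb _ (by rcases hi with rfl | rfl <;> simp)
    · push Not at hi
      exact h0 i (by simp [hia, hi.1]) _ (by simp [U, hi.2, mem_span_singleton_self])

end MvPolynomial

theorem dblVanish_eq_inf_ker {K : Type} [Field K] (N d : ℕ) {ι : Type} (p : ι → Fin N → K) :
    dblVanish K N d p =
      homogeneousSubmodule (Fin N) K d ⊓
        LinearMap.ker (LinearMap.pi fun a => gradientAt (p a)) := by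
  simp only [dblVanish, gradientAt, LinearMap.ker_pi]

theorem first_veronese_terracini_noncollinear_general
    {K : Type} [Field K] [CharZero K]
    (n d : ℕ) (hd : 3 ≤ d)
    (S : Fin ((d + 3) / 2) → (Fin (n + 1) → K))
    (hS0 : ∀ i, S i ≠ 0)
    (hSd : ∀ i j, i ≠ j → ∀ c : K, S i ≠ c • S j)
    (hncol : 3 ≤ Module.finrank K ↥(Submodule.span K (Set.range S))) :
    Module.finrank K ↥(dblVanish K (n + 1) d S) + ((d + 3) / 2) * (n + 1)
      = Nat.choose (n + d) n := by
  have hdist : ∀ i j, i ≠ j → S i ∉ K ∙ S j := fun i j hij hmem =>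
    let ⟨c, hc⟩ := mem_span_singleton.mp hmem
    hSd i j hij c hc.symm
  have hsurj : (homogeneousSubmodule (Fin (n + 1)) K d).map
      (LinearMap.pi fun a => gradientAt (S a)) = ⊤ := by
    refine map_pi_eq_top_of_forall_exists fun a v => ?_
    obtain ⟨h, hh, h1, h0⟩ := exists_isHomogeneous_eval_eq_one_eval_eq_zero hdist
      (exists_notMem_span_pair_of_three_le_finrank hncol) a
    have hdeg : 2 * (Fintype.card (Fin ((d + 3) / 2)) - 2) < d := by
      rw [Fintype.card_fin]; omega
    obtain ⟨f, hf, hfa, hfb⟩ := exists_isHomogeneous_gradientAt_eq hdeg (hS0 a) hh h1 v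
    exact ⟨f, hf, hfa, fun b hb => hfb _ (h0 b hb)⟩
  have hrank := finrank_inf_ker_add_finrank_of_map_eq_top hsurj
  rw [finrank_homogeneousSubmodule, Module.finrank_pi_fintype] at hrank
  rw [dblVanish_eq_inf_ker, Nat.choose_symm_add]
  simpa using hrank

/-- **Non-collinear points are not in the first Terracini locus of the Veronese variety.**
Let `n ≥ 2`, `d ≥ 3` and `r = ⌈(d+2)/2⌉ = (d+3)/2` (integer division).  If `S` is a set of `r`
distinct non-collinear points of `ℙⁿ` (their representatives span a subspace of dimension `≥ 3`),
then the double points `2S` impose independent conditions on degree-`d` forms: the space of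
degree-`d` forms singular at every point of `S` has dimension exactly
`C(n + d, n) - r (n + 1)`, i.e. `ν_d(S) ∉ Ter_r(Vₙᵈ)`. -/
theorem first_veronese_terracini_noncollinear
    {K : Type} [Field K] [IsAlgClosed K] [CharZero K]
    (n d : ℕ) (hn : 2 ≤ n) (hd : 3 ≤ d)
    (S : Fin ((d + 3) / 2) → (Fin (n + 1) → K))
    (hS0 : ∀ i, S i ≠ 0)
    (hSd : ∀ i j, i ≠ j → ∀ c : K, S i ≠ c • S j)
    (hncol : 3 ≤ Module.finrank K ↥(Submodule.span K (Set.range S))) :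
    Module.finrank K ↥(dblVanish K (n + 1) d S) + ((d + 3) / 2) * (n + 1)
      = Nat.choose (n + d) n :=
  first_veronese_terracini_noncollinear_general n d hd S hS0 hSd hncol
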